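/- Fix a prime p, an integer k > 0, and positive integers n_1, ..., n_{k-1}. Choose integers r, t > 0 with p^r > n_1 + ... + n_{k-1} and p^t ≥ k, and set n_k = p^r − (n_1 + ... + n_{k-1}). Let N be the direct product of p^r copies of Z_{p^t}, let P = Z_{p^t} ≀ Z_{p^r} = Z_{p^r} ⋉ N, fix a generator c of Z_{p^t} and α ∈ Lin(Z_{p^t}) with α(c) a primitive p^t-th root of unity, let λ = (α, 1, ..., 1) ∈ Lin(N), and let ψ = λ^P ∈ Irr(P). Let q ∈ N be the element whose first n_1 coordinates are c, whose next n_2 coordinates are c^2, ..., whose next n_{k-1} coordinates are c^{k-1}, and whose remaining n_k coordinates are the identity; let Q = ⟨q⟩, a cyclic subgroup of N of order p^t, and let δ ∈ Lin(Q) with δ(q) = α(c). Then the characters δ, δ^2, ..., δ^{k-1}, 1_Q are pairwise distinct, and the restriction of ψ to Q satisfies ψ_Q = Σ_{i=1}^{k-1} n_i δ^i + n_k · 1_Q; in particular ψ_Q has exactly k distinct irreducible constituents with multiplicities n_1, ..., n_k. -/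

import Mathlib

/-- `χ : G → ℂ` is a (complex) character of `G`: the trace function of some
finite-dimensional complex representation of `G`. -/
def IsChar (G : Type*) [Group G] (χ : G → ℂ) : Prop :=
  ∃ (n : ℕ) (ρ : Representation ℂ G (Fin n → ℂ)),
    ∀ g : G, χ g = LinearMap.trace ℂ (Fin n → ℂ) (ρ g)

/-- The usual inner product of class functions on a finite group. -/
noncomputable def cInner (G : Type*) [Group G] [Finite G] (χ φ : G → ℂ) : ℂ :=
  (Nat.card G : ℂ)⁻¹ * ∑ᶠ g : G, χ g * (starRingEnd ℂ) (φ g)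

/-- `χ` is an irreducible character of the finite group `G`. -/
def IsIrrChar (G : Type*) [Group G] [Finite G] (χ : G → ℂ) : Prop :=
  IsChar G χ ∧ cInner G χ χ = 1

open scoped Classical in
/-- The induced character `χ^G` of a character `χ` of a subgroup `H ≤ G`. -/
noncomputable def inducedChar {G : Type*} [Group G] [Finite G]
    (H : Subgroup G) (χ : ↥H → ℂ) : G → ℂ :=
  fun g => (Nat.card H : ℂ)⁻¹ *
    ∑ᶠ x : G, if h : x⁻¹ * g * x ∈ H then χ ⟨x⁻¹ * g * x, h⟩ else 0

instance {N G : Type*} [Group N] [Group G] [Finite N] [Finite G]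
    {φ : G →* MulAut N} : Finite (N ⋊[φ] G) :=
  Finite.of_injective (fun x : N ⋊[φ] G => (x.left, x.right))
    (fun a b h => by
      cases a; cases b
      simpa [Prod.ext_iff, SemidirectProduct.ext_iff] using h)

/-- The action of the cyclic group `Z_m = Multiplicative (ZMod m)` on the
direct product `ZMod m → A` of `m` copies of `A`, cyclically permuting the
coordinates. -/
def rotAct (m : ℕ) (A : Type*) [CommGroup A] :
    Multiplicative (ZMod m) →* MulAut (ZMod m → A) where
  toFun σ :=
    { toFun := fun f j => f (j - σ.toAdd)
      invFun := fun f j => f (j + σ.toAdd)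
      left_inv := fun f => by funext j; simp
      right_inv := fun f => by funext j; simp
      map_mul' := fun f g => rfl }
  map_one' := by
    apply MulEquiv.ext; intro f; funext j; simp
  map_mul' := fun σ τ => by
    apply MulEquiv.ext; intro f; funext j
    show f (j - (σ * τ).toAdd) = f (j - σ.toAdd - τ.toAdd)
    rw [toAdd_mul, sub_sub]

/-- The base group `N` of the wreath product: the direct product of `p ^ r`
copies of the cyclic group `Z_{p^t}`, indexed by `ZMod (p ^ r)`. -/
abbrev WrBase (p r t : ℕ) : Type := ZMod (p ^ r) → Multiplicative (ZMod (p ^ t))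

/-- The wreath product `Z_{p^t} ≀ Z_{p^r} = Z_{p^r} ⋉ N`, realized as the
semidirect product of `N = WrBase p r t` by `Z_{p^r}` cyclically permuting
the coordinates. -/
abbrev Wreath (p r t : ℕ) : Type :=
  (WrBase p r t) ⋊[rotAct (p ^ r) (Multiplicative (ZMod (p ^ t)))]
    Multiplicative (ZMod (p ^ r))
open scoped Classical in
/-- Given the list `n 0, …, n (k'-1)` of the multiplicities `n_1, …, n_{k-1}`
(so `k' = k - 1`), `blockExp n l` is the exponent of the coordinate in
position `l` (0-indexed) of the element `q`: positions
`n_1 + ⋯ + n_{j-1} ≤ l < n_1 + ⋯ + n_j` get exponent `j` (so the first `n_1`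
coordinates are `c`, the next `n_2` are `c ^ 2`, …), and positions
`l ≥ n_1 + ⋯ + n_{k-1}` get exponent `0` (the identity). -/
noncomputable def blockExp {k' : ℕ} (n : Fin k' → ℕ) (l : ℕ) : ℕ :=
  if l < ∑ i, n i then
    (Finset.univ.filter fun j : Fin k' =>
      (∑ u ∈ Finset.univ.filter fun u : Fin k' => (u : ℕ) < (j : ℕ), n u) ≤ l).card
  else 0

/-!
The base group `N` is abelian and normal, with `P / N ≅ Z_{p^r}` rotating the coordinates, so
`λ^P` restricted to `N` is the sum of the `p^r` rotates of `λ`: `ψ(f) = ∑_j α(f_j)`. On `q^s`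
the coordinate `j` contributes `α(c)^(s e_j)`, where `e_j` is the block exponent of `j`; grouping
the coordinates by block gives `ψ_Q = ∑_i n_i δ^i + n_k 1_Q`. Since `k ≤ p^t`, the exponents
`1, …, k-1, 0` are distinct modulo `p^t`, so these are distinct linear characters of `Q`, and
orthogonality of linear characters reads off the multiplicities.
-/

open Finset

section BlockExponents

variable {k' : ℕ} (n : Fin k' → ℕ)

def blockStart (i : ℕ) : ℕ :=
  ∑ u ∈ univ.filter (fun u : Fin k' => (u : ℕ) < i), n u

lemma blockStart_mono : Monotone (blockStart n) := fun _ _ h =>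
  sum_le_sum_of_subset fun u hu => by
    simp only [mem_filter, mem_univ, true_and] at hu ⊢
    omega

@[simp]
lemma blockStart_zero : blockStart n 0 = 0 := by
  simp [blockStart]

lemma Fin.filter_val_lt_succ {i : ℕ} (h : i < k') :
    univ.filter (fun u : Fin k' => (u : ℕ) < i + 1) =
      insert ⟨i, h⟩ (univ.filter fun u : Fin k' => (u : ℕ) < i) := by
  ext u
  simp only [mem_filter, mem_univ, true_and, mem_insert, Fin.ext_iff]
  omega

lemma blockStart_succ {i : ℕ} (h : i < k') :
    blockStart n (i + 1) = n ⟨i, h⟩ + blockStart n i := by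
  rw [blockStart, Fin.filter_val_lt_succ h, sum_insert (by simp), blockStart]

lemma blockStart_of_le {i : ℕ} (h : k' ≤ i) : blockStart n i = ∑ u, n u := by
  rw [blockStart, filter_true_of_mem fun u _ => by omega]

lemma blockExp_of_mem_Ico {i l : ℕ} (hi : i < k')
    (hl : l ∈ Ico (blockStart n i) (blockStart n (i + 1))) : blockExp n l = i + 1 := by
  rw [mem_Ico] at hl
  have hlt : l < ∑ u, n u := hl.2.trans_le (blockStart_of_le n le_rfl ▸ blockStart_mono n hi)
  have hblock : univ.filter (fun j : Fin k' => blockStart n j ≤ l) =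
      univ.filter fun j : Fin k' => (j : ℕ) < i + 1 := by
    ext j
    simp only [mem_filter, mem_univ, true_and]
    constructor
    · intro hj
      by_contra! hij
      exact (hj.trans_lt hl.2).not_ge (blockStart_mono n hij)
    · exact fun hj => (blockStart_mono n (Nat.lt_succ_iff.mp hj)).trans hl.1
  rw [blockExp, if_pos hlt]
  exact hblock ▸ (Fin.card_filter_val_lt.trans (min_eq_right hi))

lemma blockExp_of_le {l : ℕ} (h : ∑ i, n i ≤ l) : blockExp n l = 0 := by
  rw [blockExp, if_neg (not_lt.mpr h)]

variable {M : Type*} [AddCommMonoid M] (F : ℕ → M)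

lemma sum_range_blockStart_blockExp {j : ℕ} (hj : j ≤ k') :
    ∑ l ∈ range (blockStart n j), F (blockExp n l) =
      ∑ i ∈ univ.filter (fun i : Fin k' => (i : ℕ) < j), n i • F (i + 1) := by
  induction j with
  | zero => simp
  | succ j ih =>
    have hj' : j < k' := hj
    have hblock : ∑ l ∈ Ico (blockStart n j) (blockStart n (j + 1)), F (blockExp n l) =
        n ⟨j, hj'⟩ • F (j + 1) := by
      rw [sum_congr rfl fun l hl => by rw [blockExp_of_mem_Ico n hj' hl], sum_const,
        Nat.card_Ico, blockStart_succ n hj', Nat.add_sub_cancel]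
    rw [range_eq_Ico, ← sum_Ico_consecutive _ (Nat.zero_le _) (blockStart_mono n j.le_succ),
      ← range_eq_Ico, ih hj'.le, hblock, Fin.filter_val_lt_succ hj', sum_insert (by simp),
      add_comm]

lemma sum_range_blockExp {N : ℕ} (hN : ∑ i, n i ≤ N) :
    ∑ l ∈ range N, F (blockExp n l) = ∑ i, n i • F (i + 1) + (N - ∑ i, n i) • F 0 := by
  have hfull := sum_range_blockStart_blockExp n F le_rfl
  rw [blockStart_of_le n le_rfl, filter_true_of_mem fun i _ => i.is_lt] at hfull
  have htail : ∑ l ∈ Ico (∑ i, n i) N, F (blockExp n l) = (N - ∑ i, n i) • F 0 := by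
    rw [sum_congr rfl fun l hl => by rw [blockExp_of_le n (mem_Ico.mp hl).1], sum_const,
      Nat.card_Ico]
  rw [range_eq_Ico, ← sum_Ico_consecutive _ (Nat.zero_le _) hN, ← range_eq_Ico, hfull, htail]

end BlockExponents

lemma ZMod.sum_comp_val {M : Type*} [AddCommMonoid M] {N : ℕ} [NeZero N] (F : ℕ → M) :
    ∑ j : ZMod N, F j.val = ∑ l ∈ range N, F l :=
  sum_nbij' ZMod.val (↑) (fun j _ => mem_range.2 j.val_lt) (fun _ _ => mem_univ _)
    (fun j _ => ZMod.natCast_zmod_val j) (fun _ hl => ZMod.val_cast_of_lt (mem_range.1 hl))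
    (fun _ _ => rfl)

section CharExponents

def charExp (k : ℕ) (i : Fin k) : ℕ := if (i : ℕ) < k - 1 then i + 1 else 0

lemma charExp_lt {k N : ℕ} (h : k ≤ N) (i : Fin k) : charExp k i < N := by
  have := i.is_lt
  unfold charExp
  split_ifs <;> omega

lemma charExp_injective (k : ℕ) : Function.Injective (charExp k) := fun i j h => by
  have := i.is_lt
  have := j.is_lt
  unfold charExp at h
  ext
  split_ifs at h <;> omega

lemma sum_fin_charExp {M : Type*} [AddCommMonoid M] {k : ℕ} (hk : 0 < k)
    (n : Fin (k - 1) → ℕ) (m : Fin k → ℕ)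
    (hm : ∀ (i : Fin k) (h : (i : ℕ) < k - 1), m i = n ⟨i, h⟩) (F : ℕ → M) :
    ∑ i, m i • F (charExp k i) =
      ∑ i, n i • F (i + 1) + m ⟨k - 1, Nat.sub_lt hk Nat.one_pos⟩ • F 0 := by
  obtain ⟨k', rfl⟩ : ∃ k', k = k' + 1 := ⟨k - 1, by omega⟩
  rw [Fin.sum_univ_castSucc]
  congr 1
  · refine (sum_congr rfl fun i _ => ?_).trans (Fin.sum_congr' _ (Nat.add_sub_cancel k' 1).symm)
    have hi : (i.castSucc : ℕ) < k' + 1 - 1 := by simp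
    rw [hm i.castSucc hi, charExp, if_pos hi]
    rfl
  · simp [charExp]
    rfl

end CharExponents

lemma sum_zmod_blockExp {M : Type*} [AddCommMonoid M] {k N : ℕ} [NeZero N] (hk : 0 < k)
    (n : Fin (k - 1) → ℕ) (hN : ∑ i, n i ≤ N) (m : Fin k → ℕ)
    (hm : ∀ (i : Fin k) (h : (i : ℕ) < k - 1), m i = n ⟨i, h⟩)
    (hmk : m ⟨k - 1, Nat.sub_lt hk Nat.one_pos⟩ = N - ∑ i, n i) (F : ℕ → M) :
    ∑ j : ZMod N, F (blockExp n j.val) = ∑ i, m i • F (charExp k i) := by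
  rw [ZMod.sum_comp_val (fun l => F (blockExp n l)), sum_range_blockExp n F hN,
    sum_fin_charExp hk n m hm, hmk]

section LinearCharacters

open ComplexConjugate

variable {G : Type*} [Group G] [Finite G]

lemma MonoidHom.apply_mul_conj_apply_self (ν : G →* ℂ) (g : G) : ν g * conj (ν g) = 1 := by
  have hpow : ν g ^ orderOf g = 1 := by rw [← map_pow, pow_orderOf_eq_one, map_one]
  rw [Complex.mul_conj, Complex.normSq_eq_norm_sq,
    Complex.norm_eq_one_of_pow_eq_one hpow (orderOf_pos g).ne']
  simp

lemma sum_apply_mul_conj_apply [Fintype G] (μ ν : G →* ℂ) [Decidable (μ = ν)] :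
    ∑ g, μ g * conj (ν g) = if μ = ν then (Fintype.card G : ℂ) else 0 := by
  have hone : μ * (starRingEnd ℂ).toMonoidHom.comp ν = 1 ↔ μ = ν := by
    simp only [MonoidHom.ext_iff, MonoidHom.mul_apply, MonoidHom.comp_apply,
      RingHom.toMonoidHom_eq_coe, MonoidHom.coe_coe, MonoidHom.one_apply]
    refine forall_congr' fun g => ⟨fun h => ?_, fun h => h ▸ ν.apply_mul_conj_apply_self g⟩
    have hconj : conj (ν g) ≠ 0 := right_ne_zero_of_mul_eq_one (ν.apply_mul_conj_apply_self g)
    exact mul_right_cancel₀ hconj (h.trans (ν.apply_mul_conj_apply_self g).symm)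
  classical
  have h := sum_hom_units (μ * (starRingEnd ℂ).toMonoidHom.comp ν)
  rw [Nat.cast_ite, Nat.cast_zero, if_congr hone rfl rfl] at h
  exact h

lemma cInner_monoidHom (μ ν : G →* ℂ) [Decidable (μ = ν)] :
    cInner G μ ν = if μ = ν then 1 else 0 := by
  have := Fintype.ofFinite G
  rw [cInner, finsum_eq_sum_of_fintype, sum_apply_mul_conj_apply, Nat.card_eq_fintype_card]
  split_ifs
  · exact inv_mul_cancel₀ (Nat.cast_ne_zero.mpr Fintype.card_ne_zero)
  · exact mul_zero _

lemma cInner_sum_mul_left {ι : Type*} (s : Finset ι) (a : ι → ℂ) (χ : ι → G → ℂ)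
    (φ : G → ℂ) :
    cInner G (fun g => ∑ i ∈ s, a i * χ i g) φ = ∑ i ∈ s, a i * cInner G (χ i) φ := by
  have := Fintype.ofFinite G
  simp only [cInner, finsum_eq_sum_of_fintype, sum_mul, mul_sum]
  rw [sum_comm]
  exact sum_congr rfl fun i _ => sum_congr rfl fun g _ => by ring

lemma cInner_sum_mul_monoidHom {ι : Type*} [Fintype ι] {χ : ι → G →* ℂ}
    (hχ : Function.Injective χ) (a : ι → ℂ) (i : ι) :
    cInner G (fun g => ∑ j, a j * χ j g) (χ i) = a i := by
  classical
  rw [cInner_sum_mul_left]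
  simp [cInner_monoidHom, hχ.eq_iff]

end LinearCharacters

section InducedFromBase

open SemidirectProduct

variable {N G : Type*} [CommGroup N] [Group G] {φ : G →* MulAut N}

lemma SemidirectProduct.inv_mul_inl_mul (x : N ⋊[φ] G) (f : N) :
    x⁻¹ * inl f * x = inl (φ x.right⁻¹ f) := by
  ext <;> simp [mul_comm, mul_left_comm]

lemma inducedChar_range_inl_apply_inl [Fintype N] [Fintype G] (χ : N → ℂ) (f : N) :
    inducedChar (inl : N →* N ⋊[φ] G).range (fun x => χ (x : N ⋊[φ] G).left) (inl f) =
      ∑ g : G, χ (φ g f) := by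
  have := Fintype.ofFinite (N ⋊[φ] G)
  have hmem : ∀ x : N ⋊[φ] G, x⁻¹ * inl f * x ∈ (inl : N →* N ⋊[φ] G).range :=
    fun x => ⟨_, (inv_mul_inl_mul x f).symm⟩
  have hcard : Nat.card (inl : N →* N ⋊[φ] G).range = Fintype.card N :=
    (Nat.card_congr (MonoidHom.ofInjective inl_injective).toEquiv).symm.trans
      Nat.card_eq_fintype_card
  rw [inducedChar, finsum_eq_sum_of_fintype, sum_congr rfl fun x _ => dif_pos (hmem x),
    ← equivProd.symm.sum_comp, Fintype.sum_prod_type]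
  simp only [inv_mul_inl_mul, left_inl, equivProd_symm_apply_right, sum_const, card_univ,
    nsmul_eq_mul, hcard]
  rw [← mul_assoc, inv_mul_cancel₀ (Nat.cast_ne_zero.mpr Fintype.card_ne_zero), one_mul]
  exact Fintype.sum_equiv (Equiv.inv G) _ _ fun _ => rfl

end InducedFromBase

lemma wreath_inducedChar_apply_inl {p r t : ℕ} [NeZero (p ^ r)] [NeZero (p ^ t)]
    (α : Multiplicative (ZMod (p ^ t)) →* ℂ) (lam : WrBase p r t →* ℂ)
    (hlam : ∀ f : WrBase p r t, lam f = α (f 0)) (f : WrBase p r t) :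
    inducedChar (SemidirectProduct.inl : WrBase p r t →* Wreath p r t).range
        (fun x => lam (x : Wreath p r t).left) (SemidirectProduct.inl f) =
      ∑ j, α (f j) := by
  rw [inducedChar_range_inl_apply_inl]
  simp only [hlam]
  exact Fintype.sum_equiv (Multiplicative.toAdd.trans (Equiv.subLeft 0)) _ _ fun _ => rfl

lemma orderOf_eq_of_isPrimitiveRoot_map {G M : Type*} [Monoid G] [CommMonoid M] (χ : G →* M)
    {g : G} {N : ℕ} (hg : g ^ N = 1) (hχ : IsPrimitiveRoot (χ g) N) : orderOf g = N :=
  Nat.dvd_antisymm (orderOf_dvd_of_pow_eq_one hg) (hχ.eq_orderOf ▸ orderOf_map_dvd χ g)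

lemma Subgroup.card_zpowers_of_isPrimitiveRoot {G M : Type*} [Group G] [CommMonoid M] {g : G}
    {N : ℕ} (hg : g ^ N = 1) (δ : Subgroup.zpowers g →* M)
    (hδ : IsPrimitiveRoot (δ ⟨g, Subgroup.mem_zpowers g⟩) N) :
    Nat.card (Subgroup.zpowers g) = N := by
  rw [Nat.card_zpowers, ← Subgroup.orderOf_mk g (Subgroup.mem_zpowers g)]
  exact orderOf_eq_of_isPrimitiveRoot_map δ (Subtype.ext hg) hδ

lemma Subgroup.exists_pow_eq_of_mem_zpowers {G : Type*} [Group G] [Finite G] {g : G}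
    (x : Subgroup.zpowers g) : ∃ s : ℕ, ⟨g, Subgroup.mem_zpowers g⟩ ^ s = x := by
  obtain ⟨s, hs⟩ := mem_powers_iff_mem_zpowers.mpr x.2
  exact ⟨s, Subtype.ext hs⟩

lemma WrBase.pow_eq_one {p r t : ℕ} [NeZero (p ^ t)] (f : WrBase p r t) : f ^ p ^ t = 1 :=
  funext fun j => by simpa [Nat.card_eq_fintype_card] using pow_card_eq_one' (x := f j)

lemma wreath_inducedChar_apply_inl_blockPow {p r t k : ℕ} [NeZero (p ^ r)] [NeZero (p ^ t)]
    (hk : 0 < k) (n : Fin (k - 1) → ℕ) (hrn : ∑ i, n i ≤ p ^ r) (m : Fin k → ℕ)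
    (hm : ∀ (i : Fin k) (h : (i : ℕ) < k - 1), m i = n ⟨i, h⟩)
    (hmk : m ⟨k - 1, Nat.sub_lt hk Nat.one_pos⟩ = p ^ r - ∑ i, n i)
    (c : Multiplicative (ZMod (p ^ t))) (α : Multiplicative (ZMod (p ^ t)) →* ℂ)
    (lam : WrBase p r t →* ℂ) (hlam : ∀ f : WrBase p r t, lam f = α (f 0)) (s : ℕ) :
    inducedChar (SemidirectProduct.inl : WrBase p r t →* Wreath p r t).range
        (fun x => lam (x : Wreath p r t).left)
        (SemidirectProduct.inl ((fun j : ZMod (p ^ r) => c ^ blockExp n j.val) ^ s)) =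
      ∑ i, (m i : ℂ) * (α c ^ s) ^ charExp k i := by
  rw [wreath_inducedChar_apply_inl α lam hlam]
  simp only [Pi.pow_apply, map_pow, pow_right_comm _ _ s]
  rw [sum_zmod_blockExp hk n hrn m hm hmk (fun b => (α c ^ s) ^ b)]
  simp only [nsmul_eq_mul]

/-- Fix a prime `p`, `k > 0` and positive integers `n_1, …, n_{k-1}` (here
`n : Fin (k-1) → ℕ`), and `r, t > 0` with `p ^ r > n_1 + ⋯ + n_{k-1}` and
`p ^ t ≥ k`; let `m : Fin k → ℕ` be the full list of multiplicities, with
last entry `n_k = p ^ r - (n_1 + ⋯ + n_{k-1})`.  With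
`P = Z_{p^t} ≀ Z_{p^r}`, `lam = (α, 1, …, 1)` and `ψ = lam ^ P` as before, let
`q ∈ N` have its first `n_1` coordinates equal to `c`, the next `n_2` equal
to `c ^ 2`, …, the next `n_{k-1}` equal to `c ^ (k-1)` and the remaining
`n_k` coordinates equal to `1`; let `Q = ⟨q⟩` and let `δ ∈ Lin(Q)` with
`δ q = α c`.  Then `Q` is cyclic of order `p ^ t`, the characters
`δ, δ², …, δ^(k-1), 1_Q` are pairwise distinct, and
`ψ_Q = ∑_{i=1}^{k-1} n_i δ^i + n_k 1_Q`, with `(ψ_Q, δ^i) = n_i`; in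
particular `ψ_Q` has exactly `k` distinct irreducible constituents with
multiplicities `n_1, …, n_k`. -/
theorem wreath_restriction_to_cyclic_subgroup
    (p : ℕ) (k : ℕ) (hk : 0 < k)
    (n : Fin (k - 1) → ℕ)
    (r t : ℕ)
    [NeZero (p ^ r)] [NeZero (p ^ t)]
    (hrn : ∑ i, n i < p ^ r) (htk : k ≤ p ^ t)
    (m : Fin k → ℕ)
    (hm : ∀ (i : Fin k) (h : (i : ℕ) < k - 1), m i = n ⟨i, h⟩)
    (hmk : m ⟨k - 1, Nat.sub_lt hk Nat.one_pos⟩ = p ^ r - ∑ i, n i)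
    (c : Multiplicative (ZMod (p ^ t)))
    (α : Multiplicative (ZMod (p ^ t)) →* ℂ)
    (hα : IsPrimitiveRoot (α c) (p ^ t))
    (lam : WrBase p r t →* ℂ) (hlam : ∀ f : WrBase p r t, lam f = α (f 0))
    (Nsub : Subgroup (Wreath p r t))
    (hN : Nsub = (SemidirectProduct.inl :
      WrBase p r t →* Wreath p r t).range)
    (ψ : Wreath p r t → ℂ)
    (hψ : ψ = inducedChar Nsub (fun x : ↥Nsub => lam (x : Wreath p r t).left))
    (q : WrBase p r t) (hq : q = fun j : ZMod (p ^ r) => c ^ blockExp n j.val)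
    (Q : Subgroup (Wreath p r t))
    (hQ : Q = Subgroup.zpowers (SemidirectProduct.inl q))
    (δ : ↥Q →* ℂ)
    (hδ : δ ⟨SemidirectProduct.inl q, by
        subst hQ; exact Subgroup.mem_zpowers _⟩ = α c) :
    -- `Q = ⟨q⟩` is cyclic of order `p ^ t`
    Nat.card ↥Q = p ^ t ∧
    -- `δ, δ², …, δ^(k-1), 1_Q` are pairwise distinct
    Function.Injective (fun i : Fin k =>
      (fun x : ↥Q => δ x ^ (if (i : ℕ) < k - 1 then (i : ℕ) + 1 else 0))) ∧
    -- `ψ_Q = ∑_{i=1}^{k-1} n_i δ^i + n_k 1_Q`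
    (∀ x : ↥Q, ψ (x : Wreath p r t) =
      ∑ i : Fin k, (m i : ℂ) *
        δ x ^ (if (i : ℕ) < k - 1 then (i : ℕ) + 1 else 0)) ∧
    -- multiplicities: `(ψ_Q, δ^i) = n_i`
    (∀ i : Fin k,
      cInner ↥Q (fun x : ↥Q => ψ (x : Wreath p r t))
        (fun x : ↥Q => δ x ^ (if (i : ℕ) < k - 1 then (i : ℕ) + 1 else 0))
        = (m i : ℂ)) := by
  subst hN hψ hQ
  set g : Subgroup.zpowers (SemidirectProduct.inl q : Wreath p r t) :=
    ⟨SemidirectProduct.inl q, Subgroup.mem_zpowers _⟩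
  have hcard := Subgroup.card_zpowers_of_isPrimitiveRoot
    (by rw [← map_pow, WrBase.pow_eq_one, map_one]) δ (hδ ▸ hα)
  set χ : Fin k → Subgroup.zpowers (SemidirectProduct.inl q : Wreath p r t) →* ℂ :=
    fun i => δ ^ charExp k i
  have hχ : Function.Injective χ := fun i j hij => by
    have hg := DFunLike.congr_fun hij g
    simp only [χ, MonoidHom.pow_apply, hδ] at hg
    exact charExp_injective k (hα.pow_inj (charExp_lt htk i) (charExp_lt htk j) hg)
  have hrestrict : ∀ x : Subgroup.zpowers (SemidirectProduct.inl q : Wreath p r t),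
      inducedChar (SemidirectProduct.inl : WrBase p r t →* Wreath p r t).range
        (fun y => lam (y : Wreath p r t).left) x = ∑ i, (m i : ℂ) * χ i x := by
    intro x
    obtain ⟨s, rfl⟩ : ∃ s : ℕ, g ^ s = x := Subgroup.exists_pow_eq_of_mem_zpowers x
    have hψ := wreath_inducedChar_apply_inl_blockPow hk n hrn.le m hm hmk c α lam hlam s
    rw [← hq, ← map_pow] at hψ
    simp only [χ, MonoidHom.pow_apply]
    simpa only [map_pow, hδ, SubgroupClass.coe_pow] using hψ
  refine ⟨hcard, DFunLike.coe_injective.comp hχ, hrestrict, fun i => ?_⟩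
  rw [funext hrestrict]
  exact cInner_sum_mul_monoidHom hχ _ i
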